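/- The images of the monomials 1, X, and V in Q are linearly independent over R; in particular, Q is a nontrivial ring (the ideal I is a proper ideal of R[X,V]). (This expresses the freeness assertion of Theorem 1.1: 𝒴₂ is the FREE additive R-algebra on 1₂, V, X.) -/
import Mathlib

set_option maxSynthPendingDepth 3

open MvPolynomial

noncomputable section

/-- The ring of Laurent polynomials `ℤ[A^{±1}]`. -/
abbrev L := LaurentPolynomial ℤ

/-- The element `d = -A^2 - A^{-2}` of `ℤ[A^{±1}]`. -/
def d0 : L := -LaurentPolynomial.T 2 - LaurentPolynomial.T (-2)

/-- The ring `R = ℤ[A^{±1}, d^{-1}]`, the localization of `ℤ[A^{±1}]` away from `d`. -/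
abbrev R := Localization.Away d0

/-- The image of `d` in `R`. -/
def dR : R := algebraMap L R d0

/-- The inverse `d^{-1}` of `d` in `R`. -/
def dInv : R := IsLocalization.Away.invSelf d0

/-- The polynomial ring `R[X,V]` in two commuting variables. -/
abbrev P := MvPolynomial (Fin 2) R

/-- The variable `X`. -/
def Xp : P := X 0

/-- The variable `V`. -/
def Vp : P := X 1

/-- The ideal `I` generated by `V² - (d²-1)V`, `VX - (d-d⁻¹)V` and
`X² - (d-2d⁻¹)X - d⁻²V`. -/
def I : Ideal P := Ideal.span
  {Vp ^ 2 - C (dR ^ 2 - 1) * Vp,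
   Vp * Xp - C (dR - dInv) * Vp,
   Xp ^ 2 - C (dR - 2 * dInv) * Xp - C (dInv ^ 2) * Vp}

/-- The quotient algebra `Q = R[X,V]/I`. -/
abbrev Q := P ⧸ I

/-- The image of `X` in `Q`. -/
def x : Q := Ideal.Quotient.mk I Xp

/-- The image of `V` in `Q`. -/
def v : Q := Ideal.Quotient.mk I Vp

/-! ### Auxiliary lemmas -/

/-- Evaluation of Laurent polynomials at `A = 1`. -/
def ev : L →ₐ[ℤ] ℤ := AddMonoidAlgebra.lift ℤ ℤ ℤ 1

lemma ev_T (n : ℤ) : ev (LaurentPolynomial.T n) = 1 := by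
  rw [ev, LaurentPolynomial.T, AddMonoidAlgebra.lift_single]
  simp

lemma ev_d0 : ev d0 = -2 := by
  simp [d0, ev_T]

lemma d0_ne : d0 ≠ 0 := fun h => by
  have := congrArg ev h
  rw [ev_d0, map_zero] at this; norm_num at this

instance : IsDomain L := NoZeroDivisors.to_isDomain _

lemma hle : Submonoid.powers d0 ≤ nonZeroDivisors L :=
  powers_le_nonZeroDivisors_of_noZeroDivisors d0_ne

instance : IsDomain R := IsLocalization.isDomain_localization hle

lemma inj : Function.Injective (algebraMap L R) := IsLocalization.injective R hle

lemma hdi : dR * dInv = 1 := IsLocalization.Away.mul_invSelf d0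

lemma dsq_sub_two_ne : dR ^ 2 - 2 ≠ 0 := fun h => by
  have h2 : algebraMap L R (d0 ^ 2 - 2) = 0 := by
    rw [map_sub, map_pow, map_ofNat]; unfold dR at h; exact h
  have h3 : d0 ^ 2 - 2 = 0 := inj (by rw [h2, map_zero])
  have h4 := congrArg ev h3
  rw [map_sub, map_pow, ev_d0, map_zero, map_ofNat] at h4
  norm_num at h4

lemma dsq_sub_one_ne : dR ^ 2 - 1 ≠ 0 := fun h => by
  have h2 : algebraMap L R (d0 ^ 2 - 1) = 0 := by
    rw [map_sub, map_pow, map_one]; unfold dR at h; exact h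
  have h3 : d0 ^ 2 - 1 = 0 := inj (by rw [h2, map_zero])
  have h4 := congrArg ev h3
  rw [map_sub, map_pow, ev_d0, map_zero, map_one] at h4
  norm_num at h4

lemma kert (ξ ν : R) (h1 : ν ^ 2 - (dR ^ 2 - 1) * ν = 0)
    (h2 : ν * ξ - (dR - dInv) * ν = 0)
    (h3 : ξ ^ 2 - (dR - 2 * dInv) * ξ - dInv ^ 2 * ν = 0) :
    I ≤ RingHom.ker (aeval ![ξ, ν] : P →ₐ[R] R) := by
  rw [I, Ideal.span_le]
  rintro p hp
  simp only [Set.mem_insert_iff, Set.mem_singleton_iff] at hp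
  rcases hp with rfl | rfl | rfl <;> simp [RingHom.mem_ker, Xp, Vp] <;> assumption

/-- A character of `Q` determined by a solution `(ξ, ν)` of the defining relations. -/
def χ (ξ ν : R) (h1 : ν ^ 2 - (dR ^ 2 - 1) * ν = 0)
    (h2 : ν * ξ - (dR - dInv) * ν = 0)
    (h3 : ξ ^ 2 - (dR - 2 * dInv) * ξ - dInv ^ 2 * ν = 0) : Q →ₐ[R] R :=
  Ideal.Quotient.liftₐ I (aeval ![ξ, ν])
    (fun a ha => RingHom.mem_ker.mp (kert ξ ν h1 h2 h3 ha))

lemma χ_x (ξ ν h1 h2 h3) : χ ξ ν h1 h2 h3 x = ξ := by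
  simp [χ, x, Xp]

lemma χ_v (ξ ν h1 h2 h3) : χ ξ ν h1 h2 h3 v = ν := by
  simp [χ, v, Vp]

lemma sol0 : ((0:R) ^ 2 - (dR ^ 2 - 1) * 0 = 0) ∧ ((0:R) * 0 - (dR - dInv) * 0 = 0) ∧
    ((0:R) ^ 2 - (dR - 2 * dInv) * 0 - dInv ^ 2 * 0 = 0) := by
  refine ⟨by ring, by ring, by ring⟩

lemma sol1 : ((0:R) ^ 2 - (dR ^ 2 - 1) * 0 = 0) ∧
    ((0:R) * (dR - 2 * dInv) - (dR - dInv) * 0 = 0) ∧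
    ((dR - 2 * dInv) ^ 2 - (dR - 2 * dInv) * (dR - 2 * dInv) - dInv ^ 2 * 0 = 0) := by
  refine ⟨by ring, by ring, by ring⟩

lemma sol2 : ((dR ^ 2 - 1) ^ 2 - (dR ^ 2 - 1) * (dR ^ 2 - 1) = 0) ∧
    ((dR ^ 2 - 1) * (dR - dInv) - (dR - dInv) * (dR ^ 2 - 1) = 0) ∧
    ((dR - dInv) ^ 2 - (dR - 2 * dInv) * (dR - dInv) - dInv ^ 2 * (dR ^ 2 - 1) = 0) := by
  refine ⟨by ring, by ring, ?_⟩
  linear_combination (-(dR * dInv)) * hdi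

/-- The three characters. -/
def χ0 : Q →ₐ[R] R := χ 0 0 sol0.1 sol0.2.1 sol0.2.2
def χ1 : Q →ₐ[R] R := χ (dR - 2 * dInv) 0 sol1.1 sol1.2.1 sol1.2.2
def χ2 : Q →ₐ[R] R := χ (dR - dInv) (dR ^ 2 - 1) sol2.1 sol2.2.1 sol2.2.2

set_option synthInstance.maxHeartbeats 1000000 in
theorem stmt2 : LinearIndependent R ![(1 : Q), x, v] ∧ I ≠ ⊤ := by
  constructor
  · rw [Fintype.linearIndependent_iff]
    intro g hg
    rw [Fin.sum_univ_three] at hg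
    simp only [Matrix.cons_val_zero, Matrix.cons_val_one, Matrix.head_cons,
      Matrix.cons_val_two, Matrix.tail_cons] at hg
    have e0 := congrArg χ0 hg
    have e1 := congrArg χ1 hg
    have e2 := congrArg χ2 hg
    simp only [map_add, map_smul, map_one, map_zero, χ0, χ1, χ2, χ_x, χ_v,
      smul_eq_mul, mul_one, mul_zero, add_zero] at e0 e1 e2
    -- e0 : g 0 = 0
    have hg1 : g 1 * (dR ^ 2 - 2) = 0 := by
      have := congrArg (· * dR) e1
      simp only [e0, zero_add, zero_mul] at this ⊢
      linear_combination this + (2 * g 1) * hdi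
    have hg1' : g 1 = 0 := by
      rcases mul_eq_zero.mp hg1 with h | h
      · exact h
      · exact absurd h dsq_sub_two_ne
    have hg2 : g 2 * (dR ^ 2 - 1) = 0 := by
      rw [e0, hg1'] at e2
      linear_combination e2
    have hg2' : g 2 = 0 := by
      rcases mul_eq_zero.mp hg2 with h | h
      · exact h
      · exact absurd h dsq_sub_one_ne
    intro i
    fin_cases i <;> first | exact e0 | exact hg1' | exact hg2'
  · intro h
    have h1 : (1 : P) ∈ I := Ideal.eq_top_iff_one I |>.mp h
    have := kert 0 0 sol0.1 sol0.2.1 sol0.2.2 h1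
    rw [RingHom.mem_ker, map_one] at this
    exact one_ne_zero this
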